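/- Simple (q,p)-shuffles other than the exceptional one with σ = [0,...,0,1,...,p] are in bijection with pairs (a, b) with 0 ≤ a ≤ q−1 and a+1 ≤ b ≤ a+p; in particular the number of simple (q,p)-shuffles is pq + 1. -/

import Mathlib

/-- The exceptional `(q,p)`-shuffle `σ = [0,...,0,1,...,p]` (as the `σ`-component;
recall that a shuffle is determined by its `σ`-component). -/
def exceptionalShuffle (p q : ℕ) : Fin (p + q + 1) →o Fin (p + 1) :=
  ⟨fun j => ⟨j.1 - q, by have := j.isLt; omega⟩, fun a b hab => by
    have h2 : (a : ℕ) ≤ b := hab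
    simp only [Fin.mk_le_mk]
    omega⟩

/-- A `(q,p)`-shuffle (given by its `σ`-component, a surjective monotone map
`σ : {0,...,p+q} → {0,...,p}`) is *simple* if there are `a ≤ b ≤ c` with `σ(a) = 0`,
`σ` strictly increasing on `[a,b]` (i.e. `σ ∘ [a,...,b]` non-degenerate), `σ` constant
on `[b,c]`, and `σ` strictly increasing on `[c, p+q]`. -/
def IsSimpleShuffle (p q : ℕ) (σ : Fin (p + q + 1) →o Fin (p + 1)) : Prop :=
  ∃ a b c : Fin (p + q + 1), a ≤ b ∧ b ≤ c ∧ σ a = 0 ∧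
    (∀ i j : Fin (p + q + 1), a ≤ i → i < j → j ≤ b → σ i < σ j) ∧
    (∀ i : Fin (p + q + 1), b ≤ i → i ≤ c → σ i = σ b) ∧
    (∀ i j : Fin (p + q + 1), c ≤ i → i < j → σ i < σ j)

/-! A simple shuffle has values `0` up to `a`, then `j - a` up to `b`, then `b - a` up to
`c = b - a + q`, then `j - q`. Surjectivity forces `σ` to grow by at most one per step, so
strict growth means growth by exactly one, and `σ(p+q) = p` pins down `c`. Hence every simple
shuffle is `simpleShuffle p q a b` for some `a ≤ q` and `a ≤ b ≤ a + p`; these are pairwise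
distinct when `a < q` and `a < b`, and all the others are the exceptional shuffle. -/

theorem Nat.card_subtype_eq_card_subtype_add_one {α : Type*} {P Q : α → Prop} {x : α}
    (hx : P x) (hQ : ∀ y, Q y ↔ P y ∧ y ≠ x) [Finite {y // Q y}] :
    Nat.card {y // P y} = Nat.card {y // Q y} + 1 := by
  classical
  rw [← Finite.card_option]
  refine Nat.card_congr ((Equiv.optionSubtypeNe ⟨x, hx⟩).symm.trans (Equiv.optionCongr ?_))
  exact (Equiv.subtypeEquivRight fun _ => Subtype.ext_iff.not).trans
    ((Equiv.subtypeSubtypeEquivSubtypeInter P (· ≠ x)).trans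
      (Equiv.subtypeEquivRight fun y => (hQ y).symm))

namespace Fin

variable {m n : ℕ} {f : Fin n → Fin m} {i j : Fin n}

theorem val_apply_le_val_apply_add_sub (hf : Monotone f) (hsurj : Function.Surjective f)
    (hij : i ≤ j) : (f j : ℕ) ≤ f i + (j - i) := by
  have hcover : Finset.Icc (f i) (f j) ⊆ (Finset.Icc i j).image f := by
    intro y hy
    obtain ⟨hiy, hyj⟩ := Finset.mem_Icc.mp hy
    obtain ⟨x, rfl⟩ := hsurj y
    -- clamping `x` into `[i, j]` does not change its image
    refine Finset.mem_image.mpr ⟨max i (min x j), ?_, ?_⟩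
    · exact Finset.mem_Icc.mpr ⟨le_max_left _ _, max_le hij (min_le_right _ _)⟩
    · rw [hf.map_max, hf.map_min, min_eq_left hyj, max_eq_right hiy]
  have := (Finset.card_le_card hcover).trans Finset.card_image_le
  rw [Fin.card_Icc, Fin.card_Icc] at this
  omega

theorem val_apply_add_sub_le_val_apply (hf : StrictMonoOn f (Set.Icc i j)) (hij : i ≤ j) :
    (f i : ℕ) + (j - i) ≤ f j := by
  have hmaps : Set.MapsTo f (Finset.Icc i j) (Finset.Icc (f i) (f j)) := by
    intro x hx
    obtain ⟨hix, hxj⟩ := Finset.mem_Icc.mp hx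
    exact Finset.mem_Icc.mpr ⟨hf.monotoneOn ⟨le_rfl, hij⟩ ⟨hix, hxj⟩ hix,
      hf.monotoneOn ⟨hix, hxj⟩ ⟨hij, le_rfl⟩ hxj⟩
  have := Finset.card_le_card_of_injOn f hmaps (by simpa using hf.injOn)
  rw [Fin.card_Icc, Fin.card_Icc] at this
  have : f i ≤ f j := hf.monotoneOn ⟨le_rfl, hij⟩ ⟨hij, le_rfl⟩ hij
  omega

theorem val_apply_eq_add_sub (hf : Monotone f) (hsurj : Function.Surjective f)
    (hs : StrictMonoOn f (Set.Icc i j)) (hij : i ≤ j) : (f j : ℕ) = f i + (j - i) :=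
  le_antisymm (val_apply_le_val_apply_add_sub hf hsurj hij)
    (val_apply_add_sub_le_val_apply hs hij)

end Fin

namespace SimpleShuffle

-- The outer `min p` only makes the value land in `Fin (p + 1)` for all `a, b`; it is inactive
-- when `a ≤ q` and `b ≤ a + p`.
def simpleShuffleFun (p q a b j : ℕ) : ℕ := min p (min (j - a) (max (b - a) (j - q)))

def simpleShuffle (p q a b : ℕ) : Fin (p + q + 1) →o Fin (p + 1) :=
  ⟨fun j => ⟨simpleShuffleFun p q a b j, by unfold simpleShuffleFun; omega⟩, fun i j hij => by
    have : (i : ℕ) ≤ j := hij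
    simp only [Fin.mk_le_mk, simpleShuffleFun]
    omega⟩

variable {p q a b : ℕ}

@[simp]
theorem val_simpleShuffle (j : Fin (p + q + 1)) :
    (simpleShuffle p q a b j : ℕ) = simpleShuffleFun p q a b j := rfl

@[simp]
theorem val_exceptionalShuffle (j : Fin (p + q + 1)) :
    (exceptionalShuffle p q j : ℕ) = j - q := rfl

theorem surjective_simpleShuffle (ha : a ≤ q) :
    Function.Surjective (simpleShuffle p q a b) := by
  intro k
  have hk := k.isLt
  rcases le_or_gt (k : ℕ) (b - a) with h | h
  · refine ⟨⟨a + k, by omega⟩, Fin.ext ?_⟩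
    simp only [val_simpleShuffle, simpleShuffleFun]
    omega
  · refine ⟨⟨k + q, by omega⟩, Fin.ext ?_⟩
    simp only [val_simpleShuffle, simpleShuffleFun]
    omega

theorem isSimpleShuffle_simpleShuffle (ha : a ≤ q) (hab : a ≤ b) (hb : b ≤ a + p) :
    IsSimpleShuffle p q (simpleShuffle p q a b) := by
  refine ⟨⟨a, by omega⟩, ⟨b, by omega⟩, ⟨b - a + q, by omega⟩, Fin.mk_le_mk.mpr hab,
    Fin.mk_le_mk.mpr (by omega), Fin.ext (by simp [simpleShuffleFun]), ?_, ?_, ?_⟩ <;>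
  simp only [Fin.le_def, Fin.lt_def, Fin.ext_iff, val_simpleShuffle, simpleShuffleFun] <;>
  omega

theorem simpleShuffle_eq_exceptionalShuffle_iff (ha : a ≤ q) (hb : b ≤ a + p) :
    simpleShuffle p q a b = exceptionalShuffle p q ↔ q ≤ a ∨ b ≤ a := by
  constructor
  · intro h
    by_contra! hlt
    have := congrArg (fun σ => (σ ⟨a + 1, by omega⟩ : ℕ)) h
    simp only [val_simpleShuffle, val_exceptionalShuffle, simpleShuffleFun] at this
    omega
  · intro h
    ext j
    have := j.isLt
    simp only [val_simpleShuffle, val_exceptionalShuffle, simpleShuffleFun]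
    omega

theorem exceptionalShuffle_eq_simpleShuffle : exceptionalShuffle p q = simpleShuffle p q 0 0 :=
  ((simpleShuffle_eq_exceptionalShuffle_iff q.zero_le (Nat.zero_le _)).mpr (.inr le_rfl)).symm

theorem eq_and_eq_of_simpleShuffle_eq {a' b' : ℕ} (ha : a < q) (hab : a < b) (hb : b ≤ a + p)
    (ha' : a' < q) (hab' : a' < b') (hb' : b' ≤ a' + p)
    (h : simpleShuffle p q a b = simpleShuffle p q a' b') : a = a' ∧ b = b' := by
  have hval (j : ℕ) (hj : j < p + q + 1) :
      simpleShuffleFun p q a b j = simpleShuffleFun p q a' b' j :=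
    congrArg (fun σ => (σ ⟨j, hj⟩ : ℕ)) h
  have haa' : a = a' := by
    have h1 := hval (a + 1) (by omega)
    have h2 := hval (a' + 1) (by omega)
    simp only [simpleShuffleFun] at h1 h2
    omega
  subst haa'
  have h3 := hval (b + 1) (by omega)
  have h4 := hval (b' + 1) (by omega)
  simp only [simpleShuffleFun] at h3 h4
  exact ⟨rfl, by omega⟩

theorem _root_.IsSimpleShuffle.exists_eq_simpleShuffle {σ : Fin (p + q + 1) →o Fin (p + 1)}
    (hsurj : Function.Surjective σ) (h : IsSimpleShuffle p q σ) :
    ∃ a b, a ≤ q ∧ a ≤ b ∧ b ≤ a + p ∧ σ = simpleShuffle p q a b := by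
  obtain ⟨a, b, c, hab, hbc, ha, hinc, hconst, hinc'⟩ := h
  have hinit (j) (hja : j ≤ a) : (σ j : ℕ) = 0 := by
    simpa [ha] using σ.monotone hja
  have hfirst (j) (haj : a ≤ j) (hjb : j ≤ b) : (σ j : ℕ) = j - a := by
    simpa [ha] using Fin.val_apply_eq_add_sub σ.monotone hsurj
      (fun i hi k hk hik => hinc i k hi.1 hik (hk.2.trans hjb)) haj
  have hmid (j) (hbj : b ≤ j) (hjc : j ≤ c) : (σ j : ℕ) = b - a := by
    rw [hconst j hbj hjc, hfirst b hab le_rfl]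
  have hlast (j) (hcj : c ≤ j) : (σ j : ℕ) = (b - a) + (j - c) := by
    rw [← hmid c hbc le_rfl]
    exact Fin.val_apply_eq_add_sub σ.monotone hsurj
      (fun i hi k _ hik => hinc' i k hi.1 hik) hcj
  have htop : σ (Fin.last _) = Fin.last p := by
    obtain ⟨x, hx⟩ := hsurj (Fin.last p)
    exact Fin.last_le_iff.mp (hx ▸ σ.monotone (Fin.le_last x))
  have hc : (c : ℕ) = b - a + q := by
    have := hlast (Fin.last _) (Fin.le_last c)
    rw [htop, Fin.val_last, Fin.val_last] at this
    omega
  have hbp : (b : ℕ) ≤ a + p := by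
    have := (σ b).isLt
    rw [hfirst b hab le_rfl] at this
    omega
  refine ⟨a, b, by omega, hab, hbp, ?_⟩
  ext j
  rw [val_simpleShuffle, simpleShuffleFun]
  have := j.isLt
  rcases le_total j a with hja | haj
  · rw [hinit j hja]
    omega
  rcases le_total j b with hjb | hbj
  · rw [hfirst j haj hjb]
    omega
  rcases le_total j c with hjc | hcj
  · rw [hmid j hbj hjc]
    omega
  · rw [hlast j hcj]
    omega

def pairsEquiv (p q : ℕ) :
    {ab : ℕ × ℕ // ab.1 < q ∧ ab.1 < ab.2 ∧ ab.2 ≤ ab.1 + p} ≃ Fin q × Fin p where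
  toFun x := (⟨x.1.1, x.2.1⟩, ⟨x.1.2 - x.1.1 - 1, by obtain ⟨_, _, _⟩ := x.2; omega⟩)
  invFun y := ⟨(y.1, y.1 + y.2 + 1), y.1.isLt, by omega, by omega⟩
  left_inv := by
    rintro ⟨⟨a, b⟩, _, _, _⟩
    ext <;> simp only; omega
  right_inv := by
    rintro ⟨i, k⟩
    ext <;> simp only; omega

noncomputable def nonExceptionalEquiv (p q : ℕ) :
    {ab : ℕ × ℕ // ab.1 < q ∧ ab.1 < ab.2 ∧ ab.2 ≤ ab.1 + p} ≃
      {σ : Fin (p + q + 1) →o Fin (p + 1) //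
        Function.Surjective σ ∧ IsSimpleShuffle p q σ ∧ σ ≠ exceptionalShuffle p q} :=
  Equiv.ofBijective
    (fun ⟨(a, b), ha, hab, hb⟩ => ⟨simpleShuffle p q a b, surjective_simpleShuffle ha.le,
      isSimpleShuffle_simpleShuffle ha.le hab.le hb,
      by rw [ne_eq, simpleShuffle_eq_exceptionalShuffle_iff ha.le hb]; omega⟩)
    ⟨by
      rintro ⟨⟨a, b⟩, ha, hab, hb⟩ ⟨⟨a', b'⟩, ha', hab', hb'⟩ h
      obtain ⟨rfl, rfl⟩ :=
        eq_and_eq_of_simpleShuffle_eq ha hab hb ha' hab' hb' (congrArg Subtype.val h)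
      rfl,
    by
      rintro ⟨σ, hsurj, hsimple, hne⟩
      obtain ⟨a, b, ha, hab, hb, rfl⟩ := hsimple.exists_eq_simpleShuffle hsurj
      rw [ne_eq, simpleShuffle_eq_exceptionalShuffle_iff ha hb] at hne
      exact ⟨⟨(a, b), by omega, by omega, hb⟩, rfl⟩⟩

end SimpleShuffle

open SimpleShuffle in
/-- Simple `(q,p)`-shuffles other than the exceptional one `σ = [0,...,0,1,...,p]` are
in bijection with pairs `(a, b)` with `0 ≤ a ≤ q - 1` and `a + 1 ≤ b ≤ a + p`;
in particular the number of simple `(q,p)`-shuffles is `pq + 1`. -/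
theorem statement18 (p q : ℕ) :
    Nonempty (
      {σ : Fin (p + q + 1) →o Fin (p + 1) //
        Function.Surjective σ ∧ IsSimpleShuffle p q σ ∧ σ ≠ exceptionalShuffle p q}
      ≃ {ab : ℕ × ℕ // ab.1 < q ∧ ab.1 < ab.2 ∧ ab.2 ≤ ab.1 + p}) ∧
    Nat.card {σ : Fin (p + q + 1) →o Fin (p + 1) //
        Function.Surjective σ ∧ IsSimpleShuffle p q σ} = p * q + 1 := by
  refine ⟨⟨(nonExceptionalEquiv p q).symm⟩, ?_⟩
  have hexc : Function.Surjective (exceptionalShuffle p q) ∧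
      IsSimpleShuffle p q (exceptionalShuffle p q) := by
    rw [exceptionalShuffle_eq_simpleShuffle]
    exact ⟨surjective_simpleShuffle q.zero_le,
      isSimpleShuffle_simpleShuffle q.zero_le le_rfl (Nat.zero_le _)⟩
  have hpairs := (nonExceptionalEquiv p q).symm.trans (pairsEquiv p q)
  have : Finite _ := .of_equiv _ hpairs.symm
  rw [Nat.card_subtype_eq_card_subtype_add_one (α := Fin (p + q + 1) →o Fin (p + 1))
      (P := fun σ => Function.Surjective σ ∧ IsSimpleShuffle p q σ) hexc
      fun _ => and_assoc.symm,
    Nat.card_congr hpairs, Nat.card_prod, Nat.card_fin, Nat.card_fin, mul_comm]
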